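/- (Lemma on Lipschitz bound for the heat kernel, part (b)) For every t > 0 and all y₁, y₂ ∈ ℝ^d, ‖y₁ K_t(y₁) - y₂ K_t(y₂)‖ ≤ ((e+2)/(e C_d(t))) ‖y₁ - y₂‖, where C_d(t) = (4πt)^{d/2}. -/

import Mathlib

/-! For `c ≥ 0` the map `y ↦ exp(-c‖y‖²) y` has derivative `exp(-a) (id - 2c ⟪y, ·⟫ y)`,
`a = c‖y‖²`, of operator norm at most `exp(-a) + 2a exp(-a) ≤ 1 + 2/e`, because `a exp(-a) ≤ 1/e`.
By the mean value inequality the map is `(1 + 2/e)`-Lipschitz; with `c = 1/(4t)` and the factor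
`1/C_d(t)` this is the claimed bound. -/

open Real

section GaussianVectorField

variable {E : Type*} [NormedAddCommGroup E] [InnerProductSpace ℝ E]

lemma hasFDerivAt_exp_neg_mul_norm_sq_smul (c : ℝ) (y : E) :
    HasFDerivAt (fun x : E => exp (-c * ‖x‖ ^ 2) • x)
      (exp (-c * ‖y‖ ^ 2) •
        (ContinuousLinearMap.id ℝ E - (2 * c) • (innerSL ℝ y).smulRight y)) y := by
  refine ((((hasStrictFDerivAt_norm_sq y).hasFDerivAt.const_mul (-c)).exp).smul
    (hasFDerivAt_id y)).congr_fderiv ?_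
  ext h
  simp only [neg_mul, neg_smul, smul_neg, id_eq, add_apply, smul_apply, sub_apply, neg_apply,
    ContinuousLinearMap.id_apply, ContinuousLinearMap.smulRight_apply, coe_innerSL_apply,
    nsmul_eq_mul, Nat.cast_ofNat, smul_eq_mul]
  module

lemma norm_exp_neg_mul_norm_sq_smul_fderiv_le {c : ℝ} (hc : 0 ≤ c) (y : E) :
    ‖exp (-c * ‖y‖ ^ 2) •
        (ContinuousLinearMap.id ℝ E - (2 * c) • (innerSL ℝ y).smulRight y)‖ ≤
      1 + 2 * exp (-1) := by
  set a := c * ‖y‖ ^ 2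
  have ha : 0 ≤ a := by positivity
  refine ContinuousLinearMap.opNorm_le_bound _ (by positivity) fun h => ?_
  have hinner : ‖(2 * c * inner ℝ y h) • y‖ ≤ 2 * a * ‖h‖ := by
    rw [norm_smul, norm_mul, Real.norm_of_nonneg (by positivity : (0:ℝ) ≤ 2 * c)]
    calc 2 * c * ‖inner ℝ y h‖ * ‖y‖ ≤ 2 * c * (‖y‖ * ‖h‖) * ‖y‖ := by
          gcongr; exact norm_inner_le_norm y h
      _ = 2 * a * ‖h‖ := by ring
  calc _ = ‖exp (-a) • (h - (2 * c * inner ℝ y h) • y)‖ := by simp [a, smul_smul]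
    _ ≤ exp (-a) * (‖h‖ + 2 * a * ‖h‖) := by
        rw [norm_smul, norm_of_nonneg (exp_pos _).le]
        gcongr
        exact (norm_sub_le _ _).trans (by gcongr)
    _ = (exp (-a) + 2 * (a * exp (-a))) * ‖h‖ := by ring
    _ ≤ (1 + 2 * exp (-1)) * ‖h‖ := by
        gcongr
        · exact exp_le_one_iff.2 (neg_nonpos.2 ha)
        · exact mul_exp_neg_le_exp_neg_one a

lemma norm_exp_neg_mul_norm_sq_smul_sub_le {c : ℝ} (hc : 0 ≤ c) (y₁ y₂ : E) :
    ‖exp (-c * ‖y₁‖ ^ 2) • y₁ - exp (-c * ‖y₂‖ ^ 2) • y₂‖ ≤ (1 + 2 * exp (-1)) * ‖y₁ - y₂‖ :=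
  convex_univ.norm_image_sub_le_of_norm_hasFDerivWithin_le
    (fun y _ => (hasFDerivAt_exp_neg_mul_norm_sq_smul c y).hasFDerivWithinAt)
    (fun y _ => norm_exp_neg_mul_norm_sq_smul_fderiv_le hc y) (Set.mem_univ y₂) (Set.mem_univ y₁)

end GaussianVectorField

noncomputable def heatKernel0 (d : ℕ) (t : ℝ) (y : EuclideanSpace ℝ (Fin d)) : ℝ :=
  ((4 * Real.pi * t) ^ ((d : ℝ) / 2))⁻¹ * Real.exp (-‖y‖ ^ 2 / (4 * t))

/-- Lipschitz bound for `y ↦ y K_t(y)`: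
`‖y₁ K_t(y₁) - y₂ K_t(y₂)‖ ≤ ((e+2)/(e C_d(t))) ‖y₁ - y₂‖`. -/
theorem heatKernel_vec_lipschitz (d : ℕ) (t : ℝ) (ht : 0 < t)
    (y₁ y₂ : EuclideanSpace ℝ (Fin d)) :
    ‖heatKernel0 d t y₁ • y₁ - heatKernel0 d t y₂ • y₂‖ ≤
      (Real.exp 1 + 2) / (Real.exp 1 * (4 * Real.pi * t) ^ ((d : ℝ) / 2)) * ‖y₁ - y₂‖ := by
  set C := (4 * Real.pi * t) ^ ((d : ℝ) / 2)
  have hC : 0 < C := by positivity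
  have hK : ∀ y, heatKernel0 d t y • y = C⁻¹ • (exp (-(1 / (4 * t)) * ‖y‖ ^ 2) • y) := by
    intro y
    rw [heatKernel0, smul_smul]
    congr 3
    ring
  have hconst : (exp 1 + 2) / (exp 1 * C) = C⁻¹ * (1 + 2 * exp (-1)) := by
    rw [exp_neg]
    field_simp
  rw [hK, hK, ← smul_sub, norm_smul, norm_inv, norm_of_nonneg hC.le, hconst, mul_assoc]
  gcongr
  exact norm_exp_neg_mul_norm_sq_smul_sub_le (by positivity) y₁ y₂
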